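/- arXiv:math-ph/0603006 — 4 statements merged into one kernel-verified Lean document; each statement's English description precedes it below -/
import Mathlib

section
/- Let β > 0. A function g ∈ L²(ℝ × S²) lies in the range of the map γ̃_β (applied to L²₁(ℝ³)) if and only if g(u,σ) = -e^{βu/2}·conj(g)(-u,σ) for almost every u ∈ ℝ and σ ∈ S². -/
open MeasureTheory Complex
open scoped ENNReal

noncomputable section

/-- The map `γ̃_β` sending `f ∈ L²₁(ℝ³)` to a function on `ℝ × S²`. -/
def gammaTilde (β : ℝ) (f : EuclideanSpace ℝ (Fin 3) → ℂ)
    (p : ℝ × Metric.sphere (0 : EuclideanSpace ℝ (Fin 3)) 1) : ℂ :=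
  if 0 ≤ p.1 then
    (Real.sqrt (p.1 / (1 - Real.exp (-β * p.1))) * Real.sqrt |p.1| : ℝ) *
      f (p.1 • (p.2 : EuclideanSpace ℝ (Fin 3)))
  else
    -((Real.sqrt (p.1 / (1 - Real.exp (-β * p.1))) * Real.sqrt |p.1| : ℝ) *
      (starRingEnd ℂ) (f ((-p.1) • (p.2 : EuclideanSpace ℝ (Fin 3)))))

namespace GammaTildeAux

abbrev E3 := EuclideanSpace ℝ (Fin 3)
abbrev Sph := Metric.sphere (0 : E3) 1
abbrev μprod : Measure (ℝ × Sph) :=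
  (volume : Measure ℝ).prod ((volume : Measure E3)).toSphere

/-- The scalar coefficient in `gammaTilde`. -/
def cst (β u : ℝ) : ℝ := Real.sqrt (u / (1 - Real.exp (-β * u))) * Real.sqrt |u|

lemma gammaTilde_def (β : ℝ) (f : E3 → ℂ) (p : ℝ × Sph) :
    gammaTilde β f p =
      if 0 ≤ p.1 then (cst β p.1 : ℝ) * f (p.1 • (p.2 : E3))
      else -((cst β p.1 : ℝ) * (starRingEnd ℂ) (f ((-p.1) • (p.2 : E3)))) :=
  rfl

lemma cst_nonneg (β u : ℝ) : 0 ≤ cst β u :=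
  mul_nonneg (Real.sqrt_nonneg _) (Real.sqrt_nonneg _)

lemma one_sub_exp_pos {β u : ℝ} (hβ : 0 < β) (hu : 0 < u) :
    0 < 1 - Real.exp (-β * u) := by
  have : Real.exp (-β * u) < 1 := by rw [Real.exp_lt_one_iff]; nlinarith
  linarith

lemma cst_pos {β u : ℝ} (hβ : 0 < β) (hu : 0 < u) : 0 < cst β u := by
  apply mul_pos
  · exact Real.sqrt_pos.2 (div_pos hu (one_sub_exp_pos hβ hu))
  · exact Real.sqrt_pos.2 (abs_pos.2 hu.ne')

lemma cst_sq {β u : ℝ} (hβ : 0 < β) (hu : 0 < u) :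
    (cst β u) ^ 2 = u ^ 2 / (1 - Real.exp (-β * u)) := by
  have h1 : 0 ≤ u / (1 - Real.exp (-β * u)) := (div_pos hu (one_sub_exp_pos hβ hu)).le
  rw [cst, mul_pow, Real.sq_sqrt h1, Real.sq_sqrt (abs_nonneg u), abs_of_pos hu]
  ring

lemma cst_reflect_aux (β u : ℝ) :
    u / (1 - Real.exp (-β * u)) = Real.exp (β * u) * (-u / (1 - Real.exp (-β * -u))) := by
  rcases eq_or_ne β 0 with rfl | hb
  · simp
  rcases eq_or_ne u 0 with rfl | hu
  · simp
  have key : ∀ x : ℝ, x ≠ 0 → 1 - Real.exp x ≠ 0 := by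
    intro x hx h
    have h' : Real.exp x = 1 := by linarith
    exact hx ((Real.exp_eq_one_iff x).1 h')
  have h1 : 1 - Real.exp (-β * u) ≠ 0 := key _ (by simp [hb, hu])
  have e1 : Real.exp (-β * u) = (Real.exp (β * u))⁻¹ := by
    rw [← Real.exp_neg]; ring_nf
  have e2 : Real.exp (-β * -u) = Real.exp (β * u) := by ring_nf
  rw [e1] at h1
  rw [e1, e2]
  have ha : Real.exp (β * u) ≠ 0 := (Real.exp_pos _).ne'
  field_simp
  rw [show Real.exp (u * β) - 1 = -(1 - Real.exp (u * β)) by ring, div_neg]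

lemma cst_reflect (β u : ℝ) : cst β u = Real.exp (β * u / 2) * cst β (-u) := by
  rw [cst, cst, abs_neg, ← mul_assoc]
  congr 1
  rw [Real.exp_half, ← Real.sqrt_mul (Real.exp_nonneg _)]
  congr 1
  exact cst_reflect_aux β u

/-- Pointwise reflection identity for `gammaTilde`. -/
lemma gammaTilde_reflect (β : ℝ) (f : E3 → ℂ) (p : ℝ × Sph) :
    gammaTilde β f p =
      -(Real.exp (β * p.1 / 2) : ℝ) * (starRingEnd ℂ) (gammaTilde β f (-p.1, p.2)) := by
  obtain ⟨u, σ⟩ := p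
  rcases lt_trichotomy u 0 with hu | rfl | hu
  · rw [gammaTilde_def, gammaTilde_def]
    rw [if_neg (not_le.2 hu), if_pos (by linarith : (0:ℝ) ≤ -u)]
    rw [map_mul, Complex.conj_ofReal, cst_reflect β u]
    push_cast
    ring
  · rw [gammaTilde_def, gammaTilde_def]
    simp only [neg_zero, if_pos le_rfl]
    have : cst β 0 = 0 := by simp [cst]
    rw [this]
    simp
  · rw [gammaTilde_def, gammaTilde_def]
    rw [if_pos hu.le, if_neg (by simp [not_le, hu] : ¬ (0:ℝ) ≤ -u)]
    rw [map_neg, map_mul, Complex.conj_ofReal, conj_conj, neg_neg]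
    rw [cst_reflect β u]
    push_cast
    ring

lemma reflect_mp : MeasurePreserving (fun p : ℝ × Sph => (-p.1, p.2)) μprod μprod := by
  have h := (Measure.measurePreserving_neg (volume : Measure ℝ)).prod
    (MeasurePreserving.id ((volume : Measure E3)).toSphere)
  exact h

lemma fst_zero_null : μprod {p : ℝ × Sph | p.1 = 0} = 0 := by
  have : {p : ℝ × Sph | p.1 = 0} = ({0} : Set ℝ) ×ˢ (Set.univ : Set Sph) := by
    ext p
    simp only [Set.mem_setOf_eq, Set.mem_prod, Set.mem_singleton_iff, Set.mem_univ, and_true]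
  rw [this, Measure.prod_prod]
  simp

lemma ae_reflect {g g' : ℝ × Sph → ℂ} (h : g =ᵐ[μprod] g') :
    (fun p : ℝ × Sph => g (-p.1, p.2)) =ᵐ[μprod] (fun p => g' (-p.1, p.2)) :=
  reflect_mp.quasiMeasurePreserving.ae_eq_comp h

/-- The candidate preimage function. -/
def fExt (β : ℝ) (g' : ℝ × Sph → ℂ) : E3 → ℂ :=
  Function.extend (Subtype.val : ({(0:E3)}ᶜ : Set E3) → E3)
    (fun x => (((cst β ‖(x : E3)‖ : ℝ) : ℂ))⁻¹ *
      g' (‖(x : E3)‖, (homeomorphUnitSphereProd E3 x).1))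
    (fun _ => 0)

lemma measurable_cst (β : ℝ) : Measurable (cst β) := by
  apply Measurable.mul
  · exact (measurable_id.div ((measurable_const.sub
      ((measurable_const.mul measurable_id).exp)))).sqrt
  · exact measurable_id.abs.sqrt

lemma measurable_fExt (β : ℝ) {g' : ℝ × Sph → ℂ}
    (hg' : StronglyMeasurable g') : Measurable (fExt β g') := by
  apply (MeasurableEmbedding.subtype_coe (measurableSet_singleton (0:E3)).compl).measurable_extend
  · apply Measurable.mul
    · exact (Complex.measurable_ofReal.comp
        ((measurable_cst β).comp (measurable_norm.comp measurable_subtype_coe))).inv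
    · exact hg'.measurable.comp
        ((measurable_norm.comp measurable_subtype_coe).prodMk
          ((homeomorphUnitSphereProd E3).measurable.fst))
  · exact measurable_const

lemma norm_smul_sphere {u : ℝ} (hu : 0 < u) (σ : Sph) :
    ‖u • (σ : E3)‖ = u := by
  rw [norm_smul, mem_sphere_zero_iff_norm.1 σ.2, mul_one, Real.norm_of_nonneg hu.le]

lemma smul_sphere_ne_zero {u : ℝ} (hu : 0 < u) (σ : Sph) :
    u • (σ : E3) ≠ 0 :=
  smul_ne_zero hu.ne' (ne_zero_of_mem_unit_sphere σ)

lemma fExt_eval (β : ℝ) (g' : ℝ × Sph → ℂ) {u : ℝ} (hu : 0 < u) (σ : Sph) :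
    fExt β g' (u • (σ : E3)) = (((cst β u : ℝ) : ℂ))⁻¹ * g' (u, σ) := by
  have hk : u • (σ : E3) ≠ 0 := smul_sphere_ne_zero hu σ
  have : u • (σ : E3) = Subtype.val (⟨u • (σ : E3), hk⟩ : ({(0:E3)}ᶜ : Set E3)) := rfl
  rw [fExt, this, Subtype.val_injective.extend_apply]
  have hn : ‖((⟨u • (σ : E3), hk⟩ : ({(0:E3)}ᶜ : Set E3)) : E3)‖ = u := norm_smul_sphere hu σ
  rw [hn]
  have hsph : ((homeomorphUnitSphereProd E3) ⟨u • (σ : E3), hk⟩).1 = σ := by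
    ext : 1
    rw [homeomorphUnitSphereProd_apply_fst_coe]
    simp only
    rw [norm_smul_sphere hu σ, smul_smul, inv_mul_cancel₀ hu.ne', one_smul]
  rw [hsph]

lemma real_bound {β r : ℝ} (hβ : 0 < β) (hr : 0 < r) :
    (1 - Real.exp (-β * r)) * (1 + r⁻¹) ≤ 1 + β := by
  have h0 : 0 ≤ 1 - Real.exp (-β * r) := by
    have : Real.exp (-β * r) ≤ 1 := Real.exp_le_one_iff.2 (by nlinarith)
    linarith
  have h1 : 1 - Real.exp (-β * r) ≤ 1 := by have := Real.exp_pos (-β * r); linarith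
  have h2 : 1 - Real.exp (-β * r) ≤ β * r := by
    have := Real.add_one_le_exp (-β * r); linarith
  have hrinv : 0 < r⁻¹ := inv_pos.2 hr
  have key : (1 - Real.exp (-β * r)) * r⁻¹ ≤ β := by
    calc (1 - Real.exp (-β * r)) * r⁻¹ ≤ (β * r) * r⁻¹ :=
          mul_le_mul_of_nonneg_right h2 hrinv.le
      _ = β := by field_simp
  nlinarith

lemma val_eq {β r : ℝ} (hβ : 0 < β) (hr : 0 < r) (z : ℂ) :
    r ^ 2 * (‖(((cst β r : ℝ) : ℂ))⁻¹ * z‖ ^ 2 * (1 + r⁻¹)) =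
      ‖z‖ ^ 2 * ((1 - Real.exp (-β * r)) * (1 + r⁻¹)) := by
  rw [norm_mul, norm_inv, Complex.norm_real, Real.norm_of_nonneg (cst_nonneg β r)]
  rw [mul_pow, inv_pow, cst_sq hβ hr]
  have h1 : (1 - Real.exp (-β * r)) ≠ 0 := (one_sub_exp_pos hβ hr).ne'
  field_simp

/-- The key ENNReal pointwise bound. -/
lemma pointwise_bound {β r : ℝ} (hβ : 0 < β) (hr : 0 < r) (z : ℂ) :
    ENNReal.ofReal (r ^ 2) *
      ENNReal.ofReal (‖(((cst β r : ℝ) : ℂ))⁻¹ * z‖ ^ 2 * (1 + r⁻¹)) ≤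
    ENNReal.ofReal (1 + β) * ENNReal.ofReal (‖z‖ ^ 2) := by
  rw [← ENNReal.ofReal_mul (by positivity), ← ENNReal.ofReal_mul (by positivity)]
  apply ENNReal.ofReal_le_ofReal
  rw [val_eq hβ hr z, mul_comm (1 + β)]
  exact mul_le_mul_of_nonneg_left (real_bound hβ hr) (by positivity)

lemma lintegral_fExt_lt_top {β : ℝ} (hβ : 0 < β) {g' : ℝ × Sph → ℂ}
    (hg' : StronglyMeasurable g')
    (hfin : ∫⁻ p, ENNReal.ofReal (‖g' p‖ ^ 2) ∂μprod < ⊤) :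
    ∫⁻ k, ENNReal.ofReal (‖fExt β g' k‖ ^ 2 * (1 + ‖k‖⁻¹)) ∂(volume : Measure E3) < ⊤ := by
  set ν := (volume : Measure E3).toSphere with hν
  set Q : E3 → ℝ≥0∞ := fun k => ENNReal.ofReal (‖fExt β g' k‖ ^ 2 * (1 + ‖k‖⁻¹)) with hQdef
  have hf := measurable_fExt β hg'
  have hQ : Measurable Q :=
    ((hf.norm.pow_const 2).mul (measurable_const.add measurable_norm.inv)).ennreal_ofReal
  set T := homeomorphUnitSphereProd E3 with hT
  set h : Sph × Set.Ioi (0:ℝ) → ℝ≥0∞ := fun y => Q ((y.2 : ℝ) • (y.1 : E3)) with hhdef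
  have hsm : Measurable fun y : Sph × Set.Ioi (0:ℝ) => ((y.2 : ℝ) • (y.1 : E3)) :=
    ((continuous_subtype_val.comp continuous_snd).smul
      (continuous_subtype_val.comp continuous_fst)).measurable
  have hh : Measurable h := hQ.comp hsm
  have hn : Module.finrank ℝ E3 - 1 = 2 := by rw [finrank_euclideanSpace_fin]
  have hGmeas : Measurable (fun p : ℝ × Sph => ENNReal.ofReal (‖g' p‖ ^ 2)) :=
    (hg'.measurable.norm.pow_const 2).ennreal_ofReal
  have key : ∫⁻ k, Q k ∂(volume : Measure E3) ≤
      ENNReal.ofReal (1 + β) * ∫⁻ p, ENNReal.ofReal (‖g' p‖ ^ 2)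
        ∂((volume : Measure ℝ).prod ν) := by
    calc ∫⁻ k, Q k ∂(volume : Measure E3)
        = ∫⁻ x : ({(0:E3)}ᶜ : Set E3), Q x ∂(Measure.comap Subtype.val volume) := by
          rw [lintegral_subtype_comap (measurableSet_singleton (0:E3)).compl,
            restrict_compl_singleton]
      _ = ∫⁻ x : ({(0:E3)}ᶜ : Set E3), h (T x) ∂(Measure.comap Subtype.val volume) := by
          refine lintegral_congr fun x => ?_
          have hx : (x : E3) ≠ 0 := x.2
          simp only [hhdef, hT, homeomorphUnitSphereProd_apply_fst_coe,
            homeomorphUnitSphereProd_apply_snd_coe]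
          rw [smul_inv_smul₀ (norm_ne_zero_iff.2 hx)]
      _ = ∫⁻ y, h y ∂(((volume : Measure E3).toSphere).prod
            (Measure.volumeIoiPow (Module.finrank ℝ E3 - 1))) :=
          ((volume : Measure E3).measurePreserving_homeomorphUnitSphereProd).lintegral_comp hh
      _ = ∫⁻ σ, ∫⁻ r, h (σ, r) ∂(Measure.volumeIoiPow 2) ∂ν := by
          rw [hn, ← hν]
          exact lintegral_prod _ hh.aemeasurable
      _ ≤ ∫⁻ σ, ENNReal.ofReal (1 + β) *
            ∫⁻ u, ENNReal.ofReal (‖g' (u, σ)‖ ^ 2) ∂(volume : Measure ℝ) ∂ν := by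
          refine lintegral_mono fun σ => ?_
          have hinner : ∫⁻ r, h (σ, r) ∂(Measure.volumeIoiPow 2) =
              ∫⁻ r : Set.Ioi (0:ℝ), ENNReal.ofReal ((r : ℝ) ^ 2) * h (σ, r)
                ∂(Measure.comap Subtype.val volume) := by
            have := lintegral_withDensity_eq_lintegral_mul
              (Measure.comap (Subtype.val) (volume : Measure ℝ))
              (f := fun r : Set.Ioi (0:ℝ) => ENNReal.ofReal ((r : ℝ) ^ 2))
              ((measurable_subtype_coe.pow_const 2).ennreal_ofReal)
              (g := fun r : Set.Ioi (0:ℝ) => h (σ, r))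
              (hh.comp measurable_prodMk_left)
            simpa [Measure.volumeIoiPow] using this
          rw [hinner]
          calc ∫⁻ r : Set.Ioi (0:ℝ), ENNReal.ofReal ((r : ℝ) ^ 2) * h (σ, r)
                ∂(Measure.comap Subtype.val volume)
              ≤ ∫⁻ r : Set.Ioi (0:ℝ), ENNReal.ofReal (1 + β) *
                  ENNReal.ofReal (‖g' ((r : ℝ), σ)‖ ^ 2) ∂(Measure.comap Subtype.val volume) := by
                refine lintegral_mono fun r => ?_
                have hr : (0:ℝ) < r := r.2
                have : h (σ, r) = ENNReal.ofReal
                    (‖(((cst β (r:ℝ) : ℝ) : ℂ))⁻¹ * g' ((r:ℝ), σ)‖ ^ 2 * (1 + ((r:ℝ))⁻¹)) := by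
                  simp only [hhdef, hQdef]
                  rw [fExt_eval β g' hr σ, norm_smul_sphere hr σ]
                rw [this]
                exact pointwise_bound hβ hr _
            _ = ENNReal.ofReal (1 + β) * ∫⁻ r : Set.Ioi (0:ℝ),
                  ENNReal.ofReal (‖g' ((r : ℝ), σ)‖ ^ 2) ∂(Measure.comap Subtype.val volume) :=
                lintegral_const_mul' _ _ ENNReal.ofReal_ne_top
            _ = ENNReal.ofReal (1 + β) * ∫⁻ u in Set.Ioi (0:ℝ),
                  ENNReal.ofReal (‖g' (u, σ)‖ ^ 2) ∂(volume : Measure ℝ) := by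
                congr 1
                exact lintegral_subtype_comap measurableSet_Ioi
                  (fun u => ENNReal.ofReal (‖g' (u, σ)‖ ^ 2))
            _ ≤ ENNReal.ofReal (1 + β) *
                  ∫⁻ u, ENNReal.ofReal (‖g' (u, σ)‖ ^ 2) ∂(volume : Measure ℝ) :=
                mul_le_mul_right (setLIntegral_le_lintegral _ _) _
      _ = ENNReal.ofReal (1 + β) * ∫⁻ σ, ∫⁻ u, ENNReal.ofReal (‖g' (u, σ)‖ ^ 2)
            ∂(volume : Measure ℝ) ∂ν := lintegral_const_mul' _ _ ENNReal.ofReal_ne_top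
      _ = ENNReal.ofReal (1 + β) * ∫⁻ u, ∫⁻ σ, ENNReal.ofReal (‖g' (u, σ)‖ ^ 2)
            ∂ν ∂(volume : Measure ℝ) := by
          congr 1
          exact lintegral_lintegral_swap
            ((hGmeas.comp (measurable_snd.prodMk measurable_fst)).aemeasurable)
      _ = ENNReal.ofReal (1 + β) * ∫⁻ p, ENNReal.ofReal (‖g' p‖ ^ 2)
            ∂((volume : Measure ℝ).prod ν) := by
          rw [lintegral_prod _ hGmeas.aemeasurable]
  exact lt_of_le_of_lt key (ENNReal.mul_lt_top ENNReal.ofReal_lt_top hfin)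

end GammaTildeAux

open GammaTildeAux

/-- Characterization of the range of `γ̃_β` on `L²₁(ℝ³)`: a square-integrable
`g` on `ℝ × S²` lies in the range iff `g(u,σ) = -e^{βu/2} conj g(-u,σ)` a.e. -/
theorem gammaTilde_range_characterization (β : ℝ) (hβ : 0 < β)
    (g : ℝ × Metric.sphere (0 : EuclideanSpace ℝ (Fin 3)) 1 → ℂ)
    (hg : MemLp g 2
      ((volume : Measure ℝ).prod
        ((volume : Measure (EuclideanSpace ℝ (Fin 3))).toSphere))) :
    (∃ f : EuclideanSpace ℝ (Fin 3) → ℂ,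
        Integrable (fun k => ‖f k‖ ^ 2 * (1 + ‖k‖⁻¹)) volume ∧
        ∀ᵐ p ∂((volume : Measure ℝ).prod
            ((volume : Measure (EuclideanSpace ℝ (Fin 3))).toSphere)),
          g p = gammaTilde β f p) ↔
      (∀ᵐ p ∂((volume : Measure ℝ).prod
            ((volume : Measure (EuclideanSpace ℝ (Fin 3))).toSphere)),
        g p = -(Real.exp (β * p.1 / 2) : ℝ) * (starRingEnd ℂ) (g (-p.1, p.2))) := by
  constructor
  · rintro ⟨f, hfi, hae⟩
    have hae' := ae_reflect hae
    filter_upwards [hae, hae'] with p h1 h2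
    rw [h1, h2]
    exact gammaTilde_reflect β f p
  · intro hrefl
    have hsm := hg.aestronglyMeasurable.stronglyMeasurable_mk
    set g' : ℝ × Sph → ℂ := hg.aestronglyMeasurable.mk g with hg'def
    have hgg' : g =ᵐ[μprod] g' := hg.aestronglyMeasurable.ae_eq_mk
    -- finiteness of the L² integral of g'
    have hfin : ∫⁻ p, ENNReal.ofReal (‖g' p‖ ^ 2) ∂μprod < ⊤ := by
      have h2 := hg.integrable_norm_rpow two_ne_zero ENNReal.ofNat_ne_top
      have h3 := h2.hasFiniteIntegral
      rw [hasFiniteIntegral_iff_norm] at h3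
      have heq : ∀ᵐ p ∂μprod, ENNReal.ofReal (‖g' p‖ ^ 2) =
          ENNReal.ofReal ‖‖g p‖ ^ (2 : ℝ≥0∞).toReal‖ := by
        filter_upwards [hgg'] with p hp
        rw [← hp]
        norm_num
      rw [lintegral_congr_ae heq]
      exact h3
    refine ⟨fExt β g', ?_, ?_⟩
    · constructor
      · exact ((((measurable_fExt β hsm).norm.pow_const 2).mul
          (measurable_const.add measurable_norm.inv))).aestronglyMeasurable
      · rw [hasFiniteIntegral_iff_norm]
        have : ∀ k : E3, ENNReal.ofReal ‖‖fExt β g' k‖ ^ 2 * (1 + ‖k‖⁻¹)‖ =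
            ENNReal.ofReal (‖fExt β g' k‖ ^ 2 * (1 + ‖k‖⁻¹)) := by
          intro k
          rw [Real.norm_of_nonneg (by positivity)]
        rw [lintegral_congr this]
        exact lintegral_fExt_lt_top hβ hsm hfin
    · have h0 : ∀ᵐ p ∂μprod, p.1 ≠ 0 := by
        rw [ae_iff]
        have : {p : ℝ × Sph | ¬ p.1 ≠ 0} = {p : ℝ × Sph | p.1 = 0} := by
          ext p; simp
        rw [this]
        exact fst_zero_null
      filter_upwards [hgg', ae_reflect hgg', hrefl, h0] with p h1 h2 h3 h4
      obtain ⟨u, σ⟩ := p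
      rcases h4.lt_or_gt with hu | hu
      · -- u < 0
        have hnu : 0 < -u := neg_pos.2 hu
        have hc : ((cst β (-u) : ℝ) : ℂ) ≠ 0 := by
          exact_mod_cast (cst_pos hβ hnu).ne'
        rw [gammaTilde_def]
        rw [if_neg (not_le.2 hu)]
        rw [fExt_eval β g' hnu σ]
        rw [h3, h2]
        rw [map_mul, map_inv₀, Complex.conj_ofReal, cst_reflect β u]
        push_cast
        field_simp
      · -- 0 < u
        have hc : ((cst β u : ℝ) : ℂ) ≠ 0 := by
          exact_mod_cast (cst_pos hβ hu).ne'
        rw [gammaTilde_def]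
        rw [if_pos hu.le]
        rw [fExt_eval β g' hu σ, h1]
        field_simp

end
end

section
/- Let N ≥ 2 and let Γ be a real N×N matrix such that all off-diagonal entries are strictly negative, Γ_{mn} < 0 for m ≠ n, and such that there exists a vector v with all components strictly positive satisfying Γv = 0. Then 0 is a simple (algebraically simple) eigenvalue of Γ and every other eigenvalue λ of Γ (over ℂ) satisfies Re λ > 0. -/
/-!
Conjugating by `D = diagonal v` replaces `Γ` by `A = D⁻¹ Γ D`, which has the same
characteristic polynomial, negative off-diagonal entries and zero row sums (`A 1 = 0`). For such
`A`, every Gershgorin disc has centre `A k k ≥ 0` and radius `A k k`, so it meets the imaginary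
axis only at `0`. Simplicity of `0` comes from a minimum principle: at a coordinate `k` where `w`
is minimal, `(A w) k = ∑_{j ≠ k} A k j (w j - w k) ≤ 0`. Hence `A w = c • 1` forces `c = 0`
(apply it to `±w`), and `A w = 0` forces `w` to be constant, so the generalized eigenspace
of `0` is the line spanned by `1`.
-/

open Matrix Polynomial Finset

namespace Module.End

variable {R M : Type*} [CommRing R] [AddCommGroup M] [Module R M]

lemma maxGenEigenspace_zero_eq_ker {f : End R M} (h : ∀ x, f (f x) = 0 → f x = 0) :
    f.maxGenEigenspace 0 = LinearMap.ker f := by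
  have hpow : ∀ (k : ℕ) (x : M), (f ^ k) x = 0 → f x = 0 := by
    intro k
    induction k with
    | zero => intro x hx; simp_all
    | succ k ih => intro x hx; exact h x (ih (f x) (by rwa [pow_succ, mul_apply] at hx))
  ext x
  simp only [mem_maxGenEigenspace, zero_smul, sub_zero, LinearMap.mem_ker]
  exact ⟨fun ⟨k, hk⟩ => hpow k x hk, fun hx => ⟨1, by rwa [pow_one]⟩⟩

end Module.End

lemma Complex.re_pos_of_norm_sub_ofReal_le {z : ℂ} {a : ℝ} (h : ‖z - a‖ ≤ a)
    (hz : z ≠ 0) : 0 < z.re := by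
  have ha : 0 ≤ a := (norm_nonneg _).trans h
  have hsq : (z.re - a) ^ 2 + z.im ^ 2 ≤ a ^ 2 := by
    have := pow_le_pow_left₀ (norm_nonneg _) h 2
    rwa [Complex.sq_norm, Complex.normSq_apply, Complex.sub_re, Complex.sub_im, Complex.ofReal_re,
      Complex.ofReal_im, sub_zero, ← sq, ← sq] at this
  have hpos : 0 < z.re ^ 2 + z.im ^ 2 := by
    have := Complex.normSq_pos.2 hz
    rwa [Complex.normSq_apply, ← sq, ← sq] at this
  nlinarith

namespace Matrix

lemma charpoly_diagonal_inv_mul_mul_diagonal {ι K : Type*} [Fintype ι] [DecidableEq ι] [Field K]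
    (M : Matrix ι ι K) {v : ι → K} (hv : ∀ i, v i ≠ 0) :
    (diagonal v⁻¹ * M * diagonal v).charpoly = M.charpoly := by
  have hvv : diagonal v * diagonal v⁻¹ = 1 := by
    rw [diagonal_mul_diagonal, ← diagonal_one]
    exact congrArg diagonal (funext fun i => mul_inv_cancel₀ (hv i))
  rw [charpoly_mul_comm, ← Matrix.mul_assoc, hvv, Matrix.one_mul]

variable {ι : Type*} [Fintype ι] [DecidableEq ι] {A : Matrix ι ι ℝ}

lemma mulVec_apply_eq_sum_erase_mul_sub (hrow : A *ᵥ 1 = 0) (w : ι → ℝ) (i : ι) :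
    (A *ᵥ w) i = ∑ j ∈ univ.erase i, A i j * (w j - w i) := by
  have hrow_i : ∑ j, A i j = 0 := by simpa [mulVec, dotProduct] using congrFun hrow i
  rw [sum_erase _ (by simp), mulVec, dotProduct]
  simp only [mul_sub, sum_sub_distrib, ← sum_mul, hrow_i, zero_mul, sub_zero]

lemma nonpos_of_mulVec_eq_const [Nonempty ι] (hoff : ∀ i j, i ≠ j → A i j ≤ 0)
    (hrow : A *ᵥ 1 = 0) {w : ι → ℝ} {c : ℝ} (h : A *ᵥ w = c • 1) : c ≤ 0 := by
  obtain ⟨k, hk⟩ := Finite.exists_min w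
  have hc : c = ∑ j ∈ univ.erase k, A k j * (w j - w k) := by
    simpa [h] using mulVec_apply_eq_sum_erase_mul_sub hrow w k
  exact hc ▸ sum_nonpos fun j hj =>
    mul_nonpos_of_nonpos_of_nonneg (hoff k j (ne_of_mem_erase hj).symm) (sub_nonneg.2 (hk j))

lemma eq_zero_of_mulVec_eq_const [Nonempty ι] (hoff : ∀ i j, i ≠ j → A i j ≤ 0)
    (hrow : A *ᵥ 1 = 0) {w : ι → ℝ} {c : ℝ} (h : A *ᵥ w = c • 1) : c = 0 := by
  have hneg : A *ᵥ -w = (-c) • 1 := by rw [mulVec_neg, h, neg_smul]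
  linarith [nonpos_of_mulVec_eq_const hoff hrow h, nonpos_of_mulVec_eq_const hoff hrow hneg]

lemma ker_toLin'_eq_span_one [Nonempty ι] (hoff : ∀ i j, i ≠ j → A i j < 0)
    (hrow : A *ᵥ 1 = 0) : LinearMap.ker (toLin' A) = ℝ ∙ 1 := by
  refine le_antisymm (fun w hw => ?_) ((Submodule.span_singleton_le_iff_mem _ _).2 hrow)
  rw [LinearMap.mem_ker, toLin'_apply] at hw
  obtain ⟨k, hk⟩ := Finite.exists_min w
  have hterms : ∀ j ∈ univ.erase k, A k j * (w j - w k) ≤ 0 := fun j hj =>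
    mul_nonpos_of_nonpos_of_nonneg (hoff k j (ne_of_mem_erase hj).symm).le (sub_nonneg.2 (hk j))
  have hsum : ∑ j ∈ univ.erase k, A k j * (w j - w k) = 0 := by
    rw [← mulVec_apply_eq_sum_erase_mul_sub hrow, hw, Pi.zero_apply]
  have hconst : ∀ j, w j = w k := fun j => by
    by_cases hjk : j = k
    · rw [hjk]
    · have := (sum_eq_zero_iff_of_nonpos hterms).1 hsum j (mem_erase.2 ⟨hjk, mem_univ j⟩)
      exact sub_eq_zero.1 ((mul_eq_zero.1 this).resolve_left (hoff k j (Ne.symm hjk)).ne)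
  exact Submodule.mem_span_singleton.2 ⟨w k, funext fun j => by simp [hconst j]⟩

lemma maxGenEigenspace_toLin'_zero_eq_span_one [Nonempty ι] (hoff : ∀ i j, i ≠ j → A i j < 0)
    (hrow : A *ᵥ 1 = 0) : Module.End.maxGenEigenspace (toLin' A) 0 = ℝ ∙ 1 := by
  rw [← ker_toLin'_eq_span_one hoff hrow]
  refine Module.End.maxGenEigenspace_zero_eq_ker fun x hx => ?_
  obtain ⟨c, hc⟩ := Submodule.mem_span_singleton.1
    (ker_toLin'_eq_span_one hoff hrow ▸ LinearMap.mem_ker.2 hx)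
  have hc0 : c = 0 := eq_zero_of_mulVec_eq_const (fun i j hij => (hoff i j hij).le) hrow
    ((toLin'_apply A x).symm.trans hc.symm)
  rw [← hc, hc0, zero_smul]

lemma rootMultiplicity_zero_charpoly_eq_one [Nonempty ι] (hoff : ∀ i j, i ≠ j → A i j < 0)
    (hrow : A *ᵥ 1 = 0) : A.charpoly.rootMultiplicity 0 = 1 := by
  rw [rootMultiplicity_eq_natTrailingDegree', ← charpoly_toLin',
    ← LinearMap.finrank_maxGenEigenspace_zero_eq,
    maxGenEigenspace_toLin'_zero_eq_span_one hoff hrow, finrank_span_singleton one_ne_zero]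

lemma sum_erase_abs_eq_diag (hoff : ∀ i j, i ≠ j → A i j ≤ 0) (hrow : A *ᵥ 1 = 0)
    (i : ι) :
    ∑ j ∈ univ.erase i, |A i j| = A i i := by
  have hrow_i : A i i + ∑ j ∈ univ.erase i, A i j = 0 := by
    rw [add_sum_erase _ _ (mem_univ i)]
    simpa [mulVec, dotProduct] using congrFun hrow i
  rw [sum_congr rfl fun j hj => abs_of_nonpos (hoff i j (ne_of_mem_erase hj).symm), sum_neg_distrib]
  linarith

lemma re_pos_of_isRoot_charpoly_map_ofReal (hoff : ∀ i j, i ≠ j → A i j ≤ 0)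
    (hrow : A *ᵥ 1 = 0) {z : ℂ} (hz : (A.map Complex.ofReal).charpoly.IsRoot z)
    (hz0 : z ≠ 0) : 0 < z.re := by
  rw [← charpoly_toLin', ← Module.End.hasEigenvalue_iff_isRoot_charpoly] at hz
  obtain ⟨k, hk⟩ := eigenvalue_mem_ball hz
  simp only [map_apply, Complex.norm_real, Real.norm_eq_abs, sum_erase_abs_eq_diag hoff hrow,
    Metric.mem_closedBall, dist_eq_norm] at hk
  exact Complex.re_pos_of_norm_sub_ofReal_le hk hz0

end Matrix

/-- Perron–Frobenius type result: if a real `N×N` matrix has strictly negative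
off-diagonal entries and annihilates a strictly positive vector, then `0` is an
algebraically simple eigenvalue and every other (complex) eigenvalue has
strictly positive real part. -/
theorem perron_frobenius_level_shift {N : ℕ} (hN : 2 ≤ N)
    (Γ : Matrix (Fin N) (Fin N) ℝ)
    (hoff : ∀ m n : Fin N, m ≠ n → Γ m n < 0)
    (v : Fin N → ℝ) (hv : ∀ i, 0 < v i) (hΓv : Γ.mulVec v = 0) :
    ((Γ.map (Complex.ofReal)).charpoly).rootMultiplicity 0 = 1 ∧
    ∀ z : ℂ, ((Γ.map (Complex.ofReal)).charpoly).IsRoot z → z ≠ 0 → 0 < z.re := by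
  have : Nonempty (Fin N) := ⟨⟨0, by omega⟩⟩
  set A := diagonal v⁻¹ * Γ * diagonal v
  have hoffA : ∀ i j, i ≠ j → A i j < 0 := fun i j hij => by
    simpa [A, diagonal_mul, mul_diagonal] using
      mul_neg_of_neg_of_pos (mul_neg_of_pos_of_neg (inv_pos.2 (hv i)) (hoff i j hij)) (hv j)
  have hrowA : A *ᵥ 1 = 0 := by
    have hdiag : diagonal v *ᵥ 1 = v := funext fun i => by simp [mulVec_diagonal]
    simp [A, ← mulVec_mulVec, hdiag, hΓv]
  have hcharA : (A.map Complex.ofReal).charpoly = A.charpoly.map Complex.ofRealHom :=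
    charpoly_map A Complex.ofRealHom
  have hchar : (Γ.map Complex.ofReal).charpoly = (A.map Complex.ofReal).charpoly := by
    rw [hcharA, charpoly_diagonal_inv_mul_mul_diagonal Γ fun i => (hv i).ne']
    exact charpoly_map Γ Complex.ofRealHom
  rw [hchar]
  refine ⟨?_, fun z =>
    re_pos_of_isRoot_charpoly_map_ofReal (fun i j hij => (hoffA i j hij).le) hrowA⟩
  rw [hcharA, ← map_zero Complex.ofRealHom, ← eq_rootMultiplicity_map Complex.ofReal_injective]
  exact rootMultiplicity_zero_charpoly_eq_one hoffA hrowA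
end

section
/- Let E > 0, β₁, β₂ > 0, and g₁, g₂ > 0. Set a = Σ_{j=1,2} g_j/(e^{β_j E} - 1) and b = Σ_{j=1,2} g_j e^{β_j E}/(e^{β_j E} - 1), and define α = b/a. Then α = 1 + (g₁ + g₂)/(g₁ρ₁ + g₂ρ₂) where ρ_j = 1/(e^{β_j E} - 1). Moreover, if β₁ > β₂ then α < e^{β₁ E}, and if β₁ = β₂ then α = e^{β₁ E}. -/
/-!
Writing `x = e^{β₁E}`, `y = e^{β₂E}`, the identity `g x / (x - 1) = g / (x - 1) + g` gives
`b = a + (g₁ + g₂)`, hence `α = 1 + (g₁ + g₂) / a`. The quotient `(g₁ + g₂) / a` is the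
`g`-weighted harmonic mean of `x - 1` and `y - 1`, so it lies strictly below `x - 1` when `y < x`
and equals `x - 1` when `y = x`.
-/

lemma mul_div_sub_one_eq_div_sub_one_add {g x : ℝ} (hx : x ≠ 1) :
    g * x / (x - 1) = g / (x - 1) + g := by
  rw [div_add' _ _ _ (sub_ne_zero.mpr hx)]
  ring

lemma weighted_ratio_eq_one_add {g₁ g₂ x y : ℝ} (hx : x ≠ 1) (hy : y ≠ 1)
    (ha : g₁ / (x - 1) + g₂ / (y - 1) ≠ 0) :
    (g₁ * x / (x - 1) + g₂ * y / (y - 1)) / (g₁ / (x - 1) + g₂ / (y - 1)) =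
      1 + (g₁ + g₂) / (g₁ / (x - 1) + g₂ / (y - 1)) := by
  rw [mul_div_sub_one_eq_div_sub_one_add hx, mul_div_sub_one_eq_div_sub_one_add hy,
    add_add_add_comm, add_div, div_self ha]

lemma add_div_div_add_div_lt {g₁ g₂ u v : ℝ} (hg₁ : 0 ≤ g₁) (hg₂ : 0 < g₂) (hv : 0 < v)
    (hvu : v < u) : (g₁ + g₂) / (g₁ / u + g₂ / v) < u := by
  have hu : 0 < u := hv.trans hvu
  have hg₂_lt : g₂ < g₂ * (u / v) := lt_mul_of_one_lt_right hg₂ ((one_lt_div hv).mpr hvu)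
  rw [div_lt_iff₀ (by positivity), mul_add, mul_div_cancel₀ _ hu.ne', mul_div_assoc',
    mul_comm u g₂, mul_div_assoc]
  linarith

lemma add_div_div_add_div_self {g₁ g₂ u : ℝ} (hg : g₁ + g₂ ≠ 0) :
    (g₁ + g₂) / (g₁ / u + g₂ / u) = u := by
  rw [← add_div, div_div_cancel₀ hg]

/-- Properties of `α = b/a` for the two-level system: the alternative formula
`α = 1 + (g₁+g₂)/(g₁ρ₁+g₂ρ₂)`, the strict bound `α < e^{β₁E}` when `β₁ > β₂`,
and equality `α = e^{β₁E}` when `β₁ = β₂`. -/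
theorem two_level_alpha_properties (E β₁ β₂ g₁ g₂ : ℝ)
    (hE : 0 < E) (hβ₁ : 0 < β₁) (hβ₂ : 0 < β₂) (hg₁ : 0 < g₁) (hg₂ : 0 < g₂) :
    let ρ₁ : ℝ := 1 / (Real.exp (β₁ * E) - 1)
    let ρ₂ : ℝ := 1 / (Real.exp (β₂ * E) - 1)
    let a : ℝ := g₁ / (Real.exp (β₁ * E) - 1) + g₂ / (Real.exp (β₂ * E) - 1)
    let b : ℝ := g₁ * Real.exp (β₁ * E) / (Real.exp (β₁ * E) - 1) +
      g₂ * Real.exp (β₂ * E) / (Real.exp (β₂ * E) - 1)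
    let α : ℝ := b / a
    α = 1 + (g₁ + g₂) / (g₁ * ρ₁ + g₂ * ρ₂) ∧
      (β₂ < β₁ → α < Real.exp (β₁ * E)) ∧
      (β₁ = β₂ → α = Real.exp (β₁ * E)) := by
  intro ρ₁ ρ₂ a b α
  have hx : 1 < Real.exp (β₁ * E) := Real.one_lt_exp_iff.mpr (mul_pos hβ₁ hE)
  have hy : 1 < Real.exp (β₂ * E) := Real.one_lt_exp_iff.mpr (mul_pos hβ₂ hE)
  have ha : 0 < a := add_pos (div_pos hg₁ (sub_pos.mpr hx)) (div_pos hg₂ (sub_pos.mpr hy))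
  have hα : α = 1 + (g₁ + g₂) / a := weighted_ratio_eq_one_add hx.ne' hy.ne' ha.ne'
  have haρ : a = g₁ * ρ₁ + g₂ * ρ₂ := by simp only [a, ρ₁, ρ₂, mul_one_div]
  refine ⟨hα.trans (by rw [haρ]), fun hβ => ?_, fun hβ => ?_⟩
  · have hyx : Real.exp (β₂ * E) < Real.exp (β₁ * E) :=
      Real.exp_lt_exp.mpr (mul_lt_mul_of_pos_right hβ hE)
    have := add_div_div_add_div_lt hg₁.le hg₂ (sub_pos.mpr hy) (sub_lt_sub_right hyx 1)
    rw [hα]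
    linarith
  · subst hβ
    rw [hα, add_div_div_add_div_self (add_pos hg₁ hg₂).ne']
    ring
end

section
/- Let β₁ > 0, E > 0, and for β₂ > 0 define φ(β₂) = e^{β₁E} - α(β₂), where α(β₂) = 1 + (g₁+g₂)/(g₁ρ₁ + g₂ρ₂(β₂)), ρ₁ = 1/(e^{β₁E}-1), ρ₂(β₂) = 1/(e^{β₂E}-1), with fixed g₁, g₂ > 0. Then φ(β₁) = 0 and the derivative of φ with respect to β₂ at β₂ = β₁ is strictly negative, i.e. for δβ = β₁ - β₂ small, φ(β₂) = c·δβ + O(δβ²) with c > 0. -/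
/-!
With `x = e^{β₁E}` and `ρ₁ = 1/(x - 1)`, at `β₂ = β₁` the denominator is `(g₁ + g₂) ρ₁`, so
`α(β₁) = 1 + 1/ρ₁ = x`. The Bose–Einstein occupation satisfies `dρ/dβ = -E x/(x - 1)²`, and the
quotient rule then gives `φ'(β₁) = -g₂ E x/(g₁ + g₂)`, which is negative.
-/

open Real

theorem hasDerivAt_one_div_exp_mul_sub_one {β E : ℝ} (h : β * E ≠ 0) :
    HasDerivAt (fun b => 1 / (exp (b * E) - 1))
      (-(exp (β * E) * E) / (exp (β * E) - 1) ^ 2) β := by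
  have hne : exp (β * E) - 1 ≠ 0 := sub_ne_zero.2 (by simpa using h)
  simpa only [one_div] using ((hasDerivAt_mul_const E).exp.sub_const 1).fun_inv hne

theorem hasDerivAt_two_level_phi {β₁ E g₁ g₂ : ℝ} (hβE : β₁ * E ≠ 0) (hg : g₁ + g₂ ≠ 0) :
    HasDerivAt (fun β₂ => exp (β₁ * E) -
        (1 + (g₁ + g₂) / (g₁ * (1 / (exp (β₁ * E) - 1)) + g₂ * (1 / (exp (β₂ * E) - 1)))))
      (-(g₂ * E * exp (β₁ * E)) / (g₁ + g₂)) β₁ := by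
  have hx : exp (β₁ * E) - 1 ≠ 0 := sub_ne_zero.2 (by simpa using hβE)
  have hden : g₁ * (1 / (exp (β₁ * E) - 1)) + g₂ * (1 / (exp (β₁ * E) - 1)) ≠ 0 := by
    rw [← add_mul]; exact mul_ne_zero hg (one_div_ne_zero hx)
  have hα := (hasDerivAt_const β₁ (g₁ + g₂)).div
    (((hasDerivAt_one_div_exp_mul_sub_one hβE).const_mul g₂).const_add _) hden
  refine ((hα.const_add 1).const_sub (exp (β₁ * E))).congr_deriv ?_
  rw [← add_mul]
  field_simp
  ring

/-- For the two-level system, `φ(β₂) = e^{β₁E} - α(β₂)` vanishes at `β₂ = β₁`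
and has strictly negative derivative there. -/
theorem two_level_phi_derivative (β₁ E g₁ g₂ : ℝ)
    (hβ₁ : 0 < β₁) (hE : 0 < E) (hg₁ : 0 < g₁) (hg₂ : 0 < g₂) :
    let ρ₁ : ℝ := 1 / (Real.exp (β₁ * E) - 1)
    let φ : ℝ → ℝ := fun β₂ =>
      Real.exp (β₁ * E) -
        (1 + (g₁ + g₂) / (g₁ * ρ₁ + g₂ * (1 / (Real.exp (β₂ * E) - 1))))
    φ β₁ = 0 ∧ deriv φ β₁ < 0 := by
  intro ρ₁ φ
  have hβE : 0 < β₁ * E := mul_pos hβ₁ hE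
  refine ⟨?_, ?_⟩
  · show exp (β₁ * E) - (1 + (g₁ + g₂) / (g₁ * ρ₁ + g₂ * ρ₁)) = 0
    have : exp (β₁ * E) - 1 ≠ 0 := sub_ne_zero.2 (one_lt_exp_iff.2 hβE).ne'
    simp only [ρ₁]
    field_simp
    ring
  · rw [(hasDerivAt_two_level_phi hβE.ne' (by positivity)).deriv, neg_div]
    exact neg_neg_of_pos (by positivity)
end
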